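/- arXiv:1606.03529 — 2 statements merged into one kernel-verified Lean document; each statement's English description precedes it below -/
import Mathlib

section
/- (Only-if direction) Let Z ∈ S^n be nonzero positive semidefinite with AᵀZ + ZA positive semidefinite and B_2ᵀZ = 0. Write Z = HHᵀ with H ∈ ℝ^{n×r} of full column rank, r = rank(Z). Then there exist λ ∈ ℂ with Re(λ) ≥ 0 and a nonzero vector v ∈ ℂ^n such that Aᵀv = λv and B_2ᵀv = 0. -/
/-!
The quadratic form of `AᵀZ + ZA` vanishes on `ker Z`, so positivity forces `ker Z` to be
`A`-invariant, and hence `range Z = (ker Z)ᗮ` is `Aᵀ`-invariant. It is nonzero and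
annihilated by `B₂ᵀ`, so over `ℂ` it contains an eigenvector `v = Z x` of `Aᵀ`, say with
eigenvalue `λ`. Then `x* (AᵀZ + ZA) x = 2 Re λ · x* Z x` with `x* Z x > 0`, so `Re λ ≥ 0`.
-/

open Matrix
open scoped ComplexOrder

namespace Matrix

theorem star_dotProduct_mulVec {m n α : Type*} [Fintype m] [Fintype n] [NonUnitalSemiring α]
    [StarRing α] (M : Matrix m n α) (u : m → α) (y : n → α) :
    star u ⬝ᵥ M *ᵥ y = star (Mᴴ *ᵥ u) ⬝ᵥ y := by
  rw [dotProduct_mulVec, star_mulVec, conjTranspose_conjTranspose]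

section RCLike

variable {n 𝕜 : Type*} [Fintype n] [RCLike 𝕜] {Z T : Matrix n n 𝕜}

theorem IsHermitian.mem_range_mulVecLin_of_orthogonal_ker [DecidableEq n] (hZ : Z.IsHermitian)
    {y : n → 𝕜} (hy : ∀ u, Z *ᵥ u = 0 → star u ⬝ᵥ y = 0) :
    y ∈ LinearMap.range Z.mulVecLin := by
  have hrange : LinearMap.range (toEuclideanLin Z) = (LinearMap.ker (toEuclideanLin Z))ᗮ := by
    rw [LinearMap.orthogonal_ker, ← toEuclideanLin_conjTranspose_eq_adjoint, hZ.eq]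
  obtain ⟨x, hx⟩ : WithLp.toLp 2 y ∈ LinearMap.range (toEuclideanLin Z) := by
    rw [hrange, Submodule.mem_orthogonal]
    intro u hu
    rw [EuclideanSpace.inner_eq_star_dotProduct, dotProduct_comm]
    exact hy _ (congrArg WithLp.ofLp hu)
  exact ⟨x.ofLp, congrArg WithLp.ofLp hx⟩

theorem PosSemidef.mulVec_conjTranspose_mulVec_eq_zero (hZ : Z.PosSemidef)
    (hM : (T * Z + Z * Tᴴ).PosSemidef) {x : n → 𝕜} (hx : Z *ᵥ x = 0) :
    Z *ᵥ Tᴴ *ᵥ x = 0 := by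
  have hform : star x ⬝ᵥ (T * Z + Z * Tᴴ) *ᵥ x = 0 := by
    rw [add_mulVec, ← mulVec_mulVec, ← mulVec_mulVec, hx, mulVec_zero, zero_add,
      star_dotProduct_mulVec, hZ.1.eq, hx, star_zero, zero_dotProduct]
  rwa [hM.dotProduct_mulVec_zero_iff, add_mulVec, ← mulVec_mulVec, hx, mulVec_zero, zero_add,
    ← mulVec_mulVec] at hform

theorem PosSemidef.mulVec_mulVec_mem_range_mulVecLin [DecidableEq n] (hZ : Z.PosSemidef)
    (hM : (T * Z + Z * Tᴴ).PosSemidef) (x : n → 𝕜) :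
    T *ᵥ Z *ᵥ x ∈ LinearMap.range Z.mulVecLin := by
  refine hZ.1.mem_range_mulVecLin_of_orthogonal_ker fun u hu => ?_
  rw [star_dotProduct_mulVec, star_dotProduct_mulVec, hZ.1.eq,
    hZ.mulVec_conjTranspose_mulVec_eq_zero hM hu, star_zero, zero_dotProduct]

theorem PosSemidef.re_nonneg_of_mulVec_mulVec_eq_smul (hZ : Z.PosSemidef)
    (hM : (T * Z + Z * Tᴴ).PosSemidef) {x : n → 𝕜} (hx : Z *ᵥ x ≠ 0) {μ : 𝕜}
    (hμ : T *ᵥ Z *ᵥ x = μ • Z *ᵥ x) : 0 ≤ RCLike.re μ := by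
  set q := star x ⬝ᵥ Z *ᵥ x with hq
  have hq_pos : 0 < RCLike.re q :=
    (RCLike.pos_iff.mp <| (hZ.dotProduct_mulVec_nonneg x).lt_of_ne' <|
      mt (hZ.dotProduct_mulVec_zero_iff x).mp hx).1
  have hq' : star (Z *ᵥ x) ⬝ᵥ x = q := by rw [hq, star_dotProduct_mulVec, hZ.1.eq]
  have hTZ : star x ⬝ᵥ (T * Z) *ᵥ x = μ * q := by
    rw [← mulVec_mulVec, hμ, dotProduct_smul, smul_eq_mul]
  have hZT : star x ⬝ᵥ (Z * Tᴴ) *ᵥ x = star μ * q := by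
    rw [← mulVec_mulVec, star_dotProduct_mulVec, hZ.1.eq, star_dotProduct_mulVec,
      conjTranspose_conjTranspose, hμ, star_smul, smul_dotProduct, hq', smul_eq_mul]
  have hform : star x ⬝ᵥ (T * Z + Z * Tᴴ) *ᵥ x = (2 * RCLike.re μ : ℝ) * q := by
    rw [add_mulVec, dotProduct_add, hTZ, hZT, ← add_mul, RCLike.star_def, RCLike.add_conj]
    push_cast
    ring
  have h := hM.re_dotProduct_nonneg x
  rw [hform, RCLike.re_ofReal_mul] at h
  linarith [nonneg_of_mul_nonneg_left h hq_pos]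

theorem PosSemidef.exists_mulVec_mulVec_eq_smul [IsAlgClosed 𝕜] [DecidableEq n]
    (hZ : Z.PosSemidef) (hM : (T * Z + Z * Tᴴ).PosSemidef) (hZ0 : Z ≠ 0) :
    ∃ μ : 𝕜, 0 ≤ RCLike.re μ ∧ ∃ x, Z *ᵥ x ≠ 0 ∧ T *ᵥ Z *ᵥ x = μ • Z *ᵥ x := by
  have : Nontrivial (LinearMap.range Z.mulVecLin) := by
    rwa [Submodule.nontrivial_iff_ne_bot, Ne, LinearMap.range_eq_bot, ← toLin'_apply',
      LinearEquiv.map_eq_zero_iff]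
  let f : Module.End 𝕜 (LinearMap.range Z.mulVecLin) :=
    T.mulVecLin.restrict fun _ ⟨x, hx⟩ => hx ▸ hZ.mulVec_mulVec_mem_range_mulVecLin hM x
  obtain ⟨μ, hμ⟩ := f.exists_eigenvalue
  obtain ⟨⟨_, x, rfl⟩, hw⟩ := hμ.exists_hasEigenvector
  have hx : Z *ᵥ x ≠ 0 := fun h => hw.2 (Subtype.ext h)
  have hTx : T *ᵥ Z *ᵥ x = μ • Z *ᵥ x := congrArg Subtype.val hw.apply_eq_smul
  exact ⟨μ, hZ.re_nonneg_of_mulVec_mulVec_eq_smul hM hx hTx, x, hx, hTx⟩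

end RCLike

section OfReal

variable {m n o : Type*}

theorem map_ofReal_mul [Fintype n] (L : Matrix m n ℝ) (M : Matrix n o ℝ) :
    (L * M).map Complex.ofReal = L.map Complex.ofReal * M.map Complex.ofReal :=
  Matrix.map_mul (f := Complex.ofRealHom)

theorem conjTranspose_map_ofReal (M : Matrix m n ℝ) :
    (M.map Complex.ofReal)ᴴ = Mᵀ.map Complex.ofReal := by
  rw [← conjTranspose_eq_transpose_of_trivial, conjTranspose_map]
  exact fun x => (Complex.conj_ofReal x).symm

theorem PosSemidef.map_ofReal [Fintype n] [DecidableEq n] {Z : Matrix n n ℝ}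
    (hZ : Z.PosSemidef) : (Z.map Complex.ofReal).PosSemidef := by
  open MatrixOrder in
  obtain ⟨C, rfl⟩ := CStarAlgebra.nonneg_iff_eq_star_mul_self.mp hZ.nonneg
  rw [star_eq_conjTranspose, conjTranspose_eq_transpose_of_trivial, map_ofReal_mul,
    ← conjTranspose_map_ofReal]
  exact posSemidef_conjTranspose_mul_self _

end OfReal

end Matrix

theorem stmt_8_general (n m₂ : ℕ) (A : Matrix (Fin n) (Fin n) ℝ)
    (B₂ : Matrix (Fin n) (Fin m₂) ℝ)
    (Z : Matrix (Fin n) (Fin n) ℝ) (hZne : Z ≠ 0) (hZ : Z.PosSemidef)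
    (hHe : (Aᵀ * Z + Z * A).PosSemidef) (hB : B₂ᵀ * Z = 0) :
    ∃ lam : ℂ, 0 ≤ lam.re ∧ ∃ v : Fin n → ℂ, v ≠ 0 ∧
      (Aᵀ.map Complex.ofReal).mulVec v = lam • v ∧
      (B₂ᵀ.map Complex.ofReal).mulVec v = 0 := by
  have hM : (Aᵀ.map Complex.ofReal * Z.map Complex.ofReal +
      Z.map Complex.ofReal * (Aᵀ.map Complex.ofReal)ᴴ).PosSemidef := by
    rw [conjTranspose_map_ofReal, transpose_transpose, ← map_ofReal_mul, ← map_ofReal_mul,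
      ← Matrix.map_add _ Complex.ofReal_add]
    exact hHe.map_ofReal
  have hZ0 : Z.map Complex.ofReal ≠ 0 := fun h => hZne <|
    Matrix.map_injective Complex.ofReal_injective (h.trans (Matrix.map_zero _ rfl).symm)
  obtain ⟨μ, hμ, x, hx, hTx⟩ := hZ.map_ofReal.exists_mulVec_mulVec_eq_smul hM hZ0
  refine ⟨μ, hμ, Z.map Complex.ofReal *ᵥ x, hx, hTx, ?_⟩
  rw [mulVec_mulVec, ← map_ofReal_mul, hB, Matrix.map_zero _ Complex.ofReal_zero, zero_mulVec]

theorem stmt_8 (n m₂ r : ℕ) (A : Matrix (Fin n) (Fin n) ℝ)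
    (B₂ : Matrix (Fin n) (Fin m₂) ℝ)
    (Z : Matrix (Fin n) (Fin n) ℝ) (hZne : Z ≠ 0) (hZ : Z.PosSemidef)
    (hHe : (Aᵀ * Z + Z * A).PosSemidef) (hB : B₂ᵀ * Z = 0)
    (H : Matrix (Fin n) (Fin r) ℝ) (hfact : Z = H * Hᵀ)
    (hfull : H.rank = r) (hr : r = Z.rank) :
    ∃ lam : ℂ, 0 ≤ lam.re ∧ ∃ v : Fin n → ℂ, v ≠ 0 ∧
      (Aᵀ.map Complex.ofReal).mulVec v = lam • v ∧
      (B₂ᵀ.map Complex.ofReal).mulVec v = 0 :=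
  stmt_8_general n m₂ A B₂ Z hZne hZ hHe hB
end

section
/- Suppose X ∈ S^n_+, Y ∈ ℝ^{m_2×n} satisfy C_1X + D_12Y = 0 and −He(AX + B_2Y) ⪰ 0, and that X = HHᵀ, Y = RHᵀ for some full column rank H ∈ ℝ^{n×r} and some R ∈ ℝ^{m_2×r} with r ≥ 1. Then there exists λ ∈ ℂ with Re(λ) ≤ 0 such that rank [[A − λI_n, B_2],[C_1, D_12]] < n + m_2 (i.e., the system has a stable invariant zero). -/
/-!
Put `G = -(A H + B₂ R)`. By the factorization, `-He(A X + B₂ Y) = He(H Gᵀ)`, and `H` has a left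
inverse `L`. On `ker Hᵀ` the quadratic form of `He(H Gᵀ)` vanishes, so positivity gives
`ker Hᵀ ⊆ ker Gᵀ`, i.e. `G = H Ω` with `Ω = L G`; then `Ω + Ωᵀ = L He(H Gᵀ) Lᵀ ⪰ 0`, so every
eigenvalue `μ` of `Ω` has `Re μ ≥ 0`. For an eigenvector `η`, the nonzero vector `(H η, R η)`
satisfies `(A + μ) H η + B₂ R η = 0` and `C₁ H η + D₁₂ R η = 0`, the latter because
`(C₁ H + D₁₂ R) Hᵀ = C₁ X + D₁₂ Y = 0`. Hence `λ = -μ` is an invariant zero with `Re λ ≤ 0`.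
-/

open Matrix
open scoped MatrixOrder ComplexOrder

namespace Matrix

theorem mulVec_eq_zero_of_mul_eq_one {K m n : Type*} [CommSemiring K] [Fintype m] [Fintype n]
    [DecidableEq n] {M : Matrix m n K} {L : Matrix n m K} (hL : L * M = 1) {v : n → K}
    (hv : M *ᵥ v = 0) : v = 0 := by
  rw [← one_mulVec v, ← hL, ← mulVec_mulVec, hv, mulVec_zero]

section Field

variable {K : Type*} [Field K] {m n r : Type*} [Fintype m] [Fintype n] [Fintype r]

theorem exists_mul_eq_one_of_rank_eq_card [DecidableEq n] (M : Matrix m n K)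
    (hM : M.rank = Fintype.card n) : ∃ L : Matrix n m K, L * M = 1 := by
  classical
  have hker : LinearMap.ker M.mulVecLin = ⊥ := by
    have := LinearMap.finrank_range_add_finrank_ker M.mulVecLin
    rwa [Module.finrank_fintype_fun_eq_card, ← rank, hM, add_eq_left,
      Submodule.finrank_eq_zero] at this
  obtain ⟨g, hg⟩ := LinearMap.exists_leftInverse_of_injective _ hker
  refine ⟨LinearMap.toMatrix' g, ?_⟩
  rw [← LinearMap.toMatrix'_toLin' M, ← LinearMap.toMatrix'_comp, Matrix.toLin'_apply', hg,
    LinearMap.toMatrix'_id]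

omit [Fintype m] in
theorem rank_lt_card_of_mulVec_eq_zero {M : Matrix m n K} {v : n → K} (hv : v ≠ 0)
    (hMv : M *ᵥ v = 0) : M.rank < Fintype.card n := by
  have hker : LinearMap.ker M.mulVecLin ≠ ⊥ :=
    (Submodule.ne_bot_iff _).mpr ⟨v, LinearMap.mem_ker.mpr hMv, hv⟩
  have := LinearMap.finrank_range_add_finrank_ker M.mulVecLin
  rw [Module.finrank_fintype_fun_eq_card, ← rank] at this
  have := Submodule.finrank_eq_zero.not.mpr hker
  omega

theorem rank_fromBlocks_sub_smul_lt {p : Type*} [Fintype p] [DecidableEq n]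
    {A : Matrix n n K} {B : Matrix n m K} {C : Matrix p n K} {D : Matrix p m K}
    {H : Matrix n r K} {R : Matrix m r K} {N : Matrix r r K}
    (hAB : A * H + B * R = H * N) (hCD : C * H + D * R = 0) {lam : K} {η : r → K}
    (hη : N *ᵥ η = lam • η) (hHη : H *ᵥ η ≠ 0) :
    (fromBlocks (A - lam • 1) B C D).rank < Fintype.card n + Fintype.card m := by
  rw [← Fintype.card_sum]
  refine rank_lt_card_of_mulVec_eq_zero (v := Sum.elim (H *ᵥ η) (R *ᵥ η))
    (fun h => hHη (funext fun i => congrFun h (Sum.inl i))) ?_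
  have htop : A *ᵥ H *ᵥ η + B *ᵥ R *ᵥ η = lam • H *ᵥ η := by
    rw [mulVec_mulVec, mulVec_mulVec, ← add_mulVec, hAB, ← mulVec_mulVec, hη, mulVec_smul]
  have hbot : C *ᵥ H *ᵥ η + D *ᵥ R *ᵥ η = 0 := by
    rw [mulVec_mulVec, mulVec_mulVec, ← add_mulVec, hCD, zero_mulVec]
  rw [fromBlocks_mulVec, Sum.elim_comp_inl, Sum.elim_comp_inr, sub_mulVec, smul_mulVec,
    one_mulVec, sub_add_eq_add_sub, htop, sub_self, hbot, Sum.elim_zero_zero]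

end Field

theorem PosSemidef.map_ofReal_s11 {n : Type*} [Fintype n] {M : Matrix n n ℝ} (hM : M.PosSemidef) :
    (M.map Complex.ofReal).PosSemidef := by
  classical
  obtain ⟨B, rfl⟩ := CStarAlgebra.nonneg_iff_eq_star_mul_self.mp hM.nonneg
  have hB : (star B * B).map Complex.ofReal = (B.map Complex.ofReal)ᴴ * B.map Complex.ofReal := by
    rw [← conjTranspose_map _ (fun _ => by simp)]
    exact Matrix.map_mul (f := Complex.ofRealHom)
  rw [hB]
  exact posSemidef_conjTranspose_mul_self _

section RCLike

variable {𝕜 : Type*} [RCLike 𝕜] {n r : Type*} [Fintype n] [Fintype r]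

theorem conjTranspose_mulVec_eq_zero_of_posSemidef [DecidableEq r] {F G : Matrix n r 𝕜}
    {L : Matrix r n 𝕜} (hL : L * F = 1) (hFG : (F * Gᴴ + G * Fᴴ).PosSemidef) {x : n → 𝕜}
    (hx : Fᴴ *ᵥ x = 0) : Gᴴ *ᵥ x = 0 := by
  have hGF : (G * Fᴴ) *ᵥ x = 0 := by rw [← mulVec_mulVec, hx, mulVec_zero]
  have hFG' : star x ⬝ᵥ ((F * Gᴴ) *ᵥ x) = 0 := by
    have hxF : star x ᵥ* F = 0 := by
      rw [← conjTranspose_conjTranspose F, ← star_mulVec, hx, star_zero]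
    rw [← mulVec_mulVec, dotProduct_mulVec, hxF, zero_dotProduct]
  have hS : (F * Gᴴ + G * Fᴴ) *ᵥ x = 0 :=
    (hFG.dotProduct_mulVec_zero_iff x).mp (by rw [add_mulVec, hGF, add_zero, hFG'])
  rw [add_mulVec, hGF, add_zero, ← mulVec_mulVec] at hS
  exact mulVec_eq_zero_of_mul_eq_one hL hS

theorem eq_mul_mul_of_posSemidef [DecidableEq r] {F G : Matrix n r 𝕜} {L : Matrix r n 𝕜}
    (hL : L * F = 1) (hFG : (F * Gᴴ + G * Fᴴ).PosSemidef) : G = F * (L * G) := by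
  rw [← conjTranspose_inj, ext_iff_mulVec]
  intro x
  have hFx : Fᴴ *ᵥ (x - Lᴴ *ᵥ Fᴴ *ᵥ x) = 0 := by
    rw [mulVec_sub, mulVec_mulVec, ← conjTranspose_mul, hL, conjTranspose_one, one_mulVec,
      sub_self]
  have hGx := conjTranspose_mulVec_eq_zero_of_posSemidef hL hFG hFx
  rw [mulVec_sub, sub_eq_zero] at hGx
  rw [hGx, conjTranspose_mul, conjTranspose_mul, mulVec_mulVec, mulVec_mulVec, Matrix.mul_assoc]

theorem exists_eq_mul_posSemidef_add_conjTranspose [DecidableEq r] {F G : Matrix n r 𝕜}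
    {L : Matrix r n 𝕜} (hL : L * F = 1) (hFG : (F * Gᴴ + G * Fᴴ).PosSemidef) :
    ∃ Ω : Matrix r r 𝕜, G = F * Ω ∧ (Ω + Ωᴴ).PosSemidef := by
  refine ⟨L * G, eq_mul_mul_of_posSemidef hL hFG, ?_⟩
  rw [eq_mul_mul_of_posSemidef hL hFG] at hFG
  convert hFG.mul_mul_conjTranspose_same L using 1
  have hL' : Fᴴ * Lᴴ = 1 := by rw [← conjTranspose_mul, hL, conjTranspose_one]
  simp only [conjTranspose_mul, Matrix.mul_add, Matrix.add_mul, ← Matrix.mul_assoc, hL,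
    Matrix.one_mul]
  simp only [Matrix.mul_assoc, hL', Matrix.mul_one]
  abel

theorem re_nonneg_of_mulVec_eq_smul {M : Matrix n n 𝕜} (hM : (M + Mᴴ).PosSemidef) {μ : 𝕜}
    {v : n → 𝕜} (hv : v ≠ 0) (hMv : M *ᵥ v = μ • v) : 0 ≤ RCLike.re μ := by
  have hform : star v ⬝ᵥ ((M + Mᴴ) *ᵥ v) = ((2 * RCLike.re μ : ℝ) : 𝕜) * (star v ⬝ᵥ v) := by
    rw [add_mulVec, dotProduct_add, hMv, dotProduct_smul, dotProduct_mulVec, vecMul_conjTranspose,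
      star_star, hMv, star_smul, smul_dotProduct, smul_eq_mul, smul_eq_mul, ← add_mul,
      RCLike.star_def, RCLike.add_conj]
    push_cast; ring
  have hre := (RCLike.nonneg_iff.mp (hM.dotProduct_mulVec_nonneg v)).1
  rw [hform, RCLike.re_ofReal_mul] at hre
  have hpos := (RCLike.pos_iff.mp (dotProduct_star_self_pos_iff.mpr hv)).1
  linarith [(mul_nonneg_iff_of_pos_right hpos).mp hre]

end RCLike

theorem exists_re_nonpos_rank_fromBlocks_lt {n m p r : Type*} [Fintype n] [Fintype m] [Fintype p]
    [Fintype r] [DecidableEq n] [DecidableEq r] [Nonempty r] {A : Matrix n n ℝ}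
    {B : Matrix n m ℝ} {C : Matrix p n ℝ} {D : Matrix p m ℝ} {H : Matrix n r ℝ}
    {R : Matrix m r ℝ} {L : Matrix r n ℝ} (hL : L * H = 1)
    (hHe : (H * (-(A * H + B * R))ᵀ + -(A * H + B * R) * Hᵀ).PosSemidef)
    (hCD : C * H + D * R = 0) :
    ∃ lam : ℂ, lam.re ≤ 0 ∧ (fromBlocks (A.map Complex.ofReal - lam • 1) (B.map Complex.ofReal)
      (C.map Complex.ofReal) (D.map Complex.ofReal)).rank < Fintype.card n + Fintype.card m := by
  obtain ⟨Ω, hGΩ, hΩ⟩ := exists_eq_mul_posSemidef_add_conjTranspose hL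
    (by simpa only [conjTranspose_eq_transpose_of_trivial] using hHe)
  set c : ℝ →+* ℂ := Complex.ofRealHom
  show ∃ lam : ℂ, lam.re ≤ 0 ∧ (fromBlocks (A.map c - lam • 1) (B.map c) (C.map c) (D.map c)).rank
    < Fintype.card n + Fintype.card m
  have hΩc : (Ω.map c + (Ω.map c)ᴴ).PosSemidef := by
    have hΩc : ((Ω + Ωᴴ).map c).PosSemidef := hΩ.map_ofReal_s11
    rwa [Matrix.map_add _ (map_add c), conjTranspose_map _ fun x => by simp [c]] at hΩc
  obtain ⟨μ, hμ⟩ := Module.End.exists_eigenvalue (Ω.map c).mulVecLin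
  obtain ⟨η, hη⟩ := hμ.exists_hasEigenvector
  have hΩη : Ω.map c *ᵥ η = μ • η := hη.apply_eq_smul
  have hLc : L.map c * H.map c = 1 := by
    rw [← Matrix.map_mul, hL, Matrix.map_one _ (map_zero c) (map_one c)]
  have hABc : A.map c * H.map c + B.map c * R.map c = H.map c * -Ω.map c := by
    rw [← Matrix.map_mul, ← Matrix.map_mul, ← Matrix.map_add _ (map_add c), Matrix.mul_neg,
      ← Matrix.map_mul, ← Matrix.map_neg _ (map_neg c), ← hGΩ, neg_neg]
  have hCDc : C.map c * H.map c + D.map c * R.map c = 0 := by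
    rw [← Matrix.map_mul, ← Matrix.map_mul, ← Matrix.map_add _ (map_add c), hCD,
      Matrix.map_zero _ (map_zero c)]
  refine ⟨-μ, by simpa using re_nonneg_of_mulVec_eq_smul hΩc hη.2 hΩη, ?_⟩
  exact rank_fromBlocks_sub_smul_lt hABc hCDc (by rw [neg_mulVec, hΩη, neg_smul])
    fun h => hη.2 (mulVec_eq_zero_of_mul_eq_one hLc h)

end Matrix

theorem stmt_11_general (n m₂ p₁ r : ℕ) (A : Matrix (Fin n) (Fin n) ℝ)
    (B₂ : Matrix (Fin n) (Fin m₂) ℝ) (C₁ : Matrix (Fin p₁) (Fin n) ℝ)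
    (D₁₂ : Matrix (Fin p₁) (Fin m₂) ℝ)
    (X : Matrix (Fin n) (Fin n) ℝ) (Y : Matrix (Fin m₂) (Fin n) ℝ)
    (heq : C₁ * X + D₁₂ * Y = 0)
    (hHe : ((-(A * X + B₂ * Y)) - (A * X + B₂ * Y)ᵀ).PosSemidef)
    (H : Matrix (Fin n) (Fin r) ℝ) (R : Matrix (Fin m₂) (Fin r) ℝ)
    (hXf : X = H * Hᵀ) (hYf : Y = R * Hᵀ) (hfull : H.rank = r) (hr : 1 ≤ r) :
    ∃ lam : ℂ, lam.re ≤ 0 ∧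
      (Matrix.fromBlocks (A.map Complex.ofReal - lam • 1) (B₂.map Complex.ofReal)
        (C₁.map Complex.ofReal) (D₁₂.map Complex.ofReal)).rank < n + m₂ := by
  obtain ⟨L, hL⟩ := exists_mul_eq_one_of_rank_eq_card H (by rwa [Fintype.card_fin])
  have hCD : C₁ * H + D₁₂ * R = 0 := calc
    C₁ * H + D₁₂ * R = (C₁ * H + D₁₂ * R) * (L * H)ᵀ := by rw [hL, transpose_one, Matrix.mul_one]
    _ = (C₁ * X + D₁₂ * Y) * Lᵀ := by
      rw [hXf, hYf, transpose_mul]; simp only [Matrix.add_mul, Matrix.mul_assoc]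
    _ = 0 := by rw [heq, Matrix.zero_mul]
  have : Nonempty (Fin r) := Fin.pos_iff_nonempty.mp hr
  have hHe' : (H * (-(A * H + B₂ * R))ᵀ + -(A * H + B₂ * R) * Hᵀ).PosSemidef := by
    convert hHe using 1
    rw [hXf, hYf]
    simp only [transpose_neg, transpose_add, transpose_mul, transpose_transpose, Matrix.add_mul,
      Matrix.mul_assoc, Matrix.neg_mul, Matrix.mul_neg, Matrix.mul_add]
    abel
  simpa using exists_re_nonpos_rank_fromBlocks_lt hL hHe' hCD

theorem stmt_11 (n m₂ p₁ r : ℕ) (A : Matrix (Fin n) (Fin n) ℝ)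
    (B₂ : Matrix (Fin n) (Fin m₂) ℝ) (C₁ : Matrix (Fin p₁) (Fin n) ℝ)
    (D₁₂ : Matrix (Fin p₁) (Fin m₂) ℝ)
    (X : Matrix (Fin n) (Fin n) ℝ) (Y : Matrix (Fin m₂) (Fin n) ℝ)
    (hX : X.PosSemidef)
    (heq : C₁ * X + D₁₂ * Y = 0)
    (hHe : ((-(A * X + B₂ * Y)) - (A * X + B₂ * Y)ᵀ).PosSemidef)
    (H : Matrix (Fin n) (Fin r) ℝ) (R : Matrix (Fin m₂) (Fin r) ℝ)
    (hXf : X = H * Hᵀ) (hYf : Y = R * Hᵀ) (hfull : H.rank = r) (hr : 1 ≤ r) :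
    ∃ lam : ℂ, lam.re ≤ 0 ∧
      (Matrix.fromBlocks (A.map Complex.ofReal - lam • 1) (B₂.map Complex.ofReal)
        (C₁.map Complex.ofReal) (D₁₂.map Complex.ofReal)).rank < n + m₂ :=
  stmt_11_general n m₂ p₁ r A B₂ C₁ D₁₂ X Y heq hHe H R hXf hYf hfull hr
end
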